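/- With g₂, g₃ and f defined as: g₂(κ) := 1/κ³ + 5/κ⁵ + 11/κ⁶ + 5/κ⁷ + 1/κ⁸ + 2/κ⁹ + 1/κ¹⁰, g₃(κ) := 8 + 24/κ² + 60/κ³ + 41/κ⁴ + 10/κ⁵ + 21/κ⁶ + 12/κ⁷ + 1/κ⁸ + 2/κ⁹ + 1/κ¹⁰, f(x) := x³ - g₂(κ)x² + (g₃(κ)/κ⁹)x - g₃(κ)/κ¹⁵, for every κ ≥ 1 and every x ≥ 4/κ³ + 40/κ⁵ one has f(x) > 0. -/
import Mathlib

noncomputable def g2 (κ : ℝ) : ℝ :=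
  1/κ^3 + 5/κ^5 + 11/κ^6 + 5/κ^7 + 1/κ^8 + 2/κ^9 + 1/κ^10

noncomputable def g3 (κ : ℝ) : ℝ :=
  8 + 24/κ^2 + 60/κ^3 + 41/κ^4 + 10/κ^5 + 21/κ^6 + 12/κ^7 + 1/κ^8 + 2/κ^9 + 1/κ^10

noncomputable def f (κ x : ℝ) : ℝ :=
  x^3 - g2 κ * x^2 + (g3 κ / κ^9) * x - g3 κ / κ^15

theorem stmt_4 (κ : ℝ) (hκ : 1 ≤ κ) (x : ℝ) (hx : 4/κ^3 + 40/κ^5 ≤ x) :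
    0 < f κ x := by
  have hκ0 : (0:ℝ) < κ := lt_of_lt_of_le zero_lt_one hκ
  set t : ℝ := 1/κ with ht
  have ht0 : 0 < t := by positivity
  have ht1 : t ≤ 1 := by rw [ht]; rw [div_le_one hκ0]; exact hκ
  have hdiv : ∀ n : ℕ, 1/κ^n = t^n := by
    intro n; rw [ht, one_div_pow]
  have hg2 : g2 κ = t^3 + 5*t^5 + 11*t^6 + 5*t^7 + t^8 + 2*t^9 + t^10 := by
    unfold g2
    rw [div_eq_mul_inv (5:ℝ), div_eq_mul_inv (11:ℝ), div_eq_mul_inv (5:ℝ),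
        div_eq_mul_inv (2:ℝ)]
    rw [ht]; field_simp
  have hg3 : 0 < g3 κ := by
    unfold g3; positivity
  have hxt : 4*t^3 + 40*t^5 ≤ x := by
    have := hdiv 3; have := hdiv 5
    calc 4*t^3 + 40*t^5 = 4/κ^3 + 40/κ^5 := by rw [← hdiv 3, ← hdiv 5]; ring
    _ ≤ x := hx
  have hx1 : g2 κ < x := by
    rw [hg2]
    have h6 : t^6 ≤ t^5 := pow_le_pow_of_le_one ht0.le ht1 (by norm_num)
    have h7 : t^7 ≤ t^5 := pow_le_pow_of_le_one ht0.le ht1 (by norm_num)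
    have h8 : t^8 ≤ t^5 := pow_le_pow_of_le_one ht0.le ht1 (by norm_num)
    have h9 : t^9 ≤ t^5 := pow_le_pow_of_le_one ht0.le ht1 (by norm_num)
    have h10 : t^10 ≤ t^5 := pow_le_pow_of_le_one ht0.le ht1 (by norm_num)
    have h35 : (0:ℝ) < t^3 := by positivity
    have h55 : (0:ℝ) < t^5 := by positivity
    nlinarith
  have hx2 : 1/κ^6 < x := by
    rw [hdiv 6]
    have h6 : t^6 ≤ t^3 := pow_le_pow_of_le_one ht0.le ht1 (by norm_num)
    have h55 : (0:ℝ) < t^5 := by positivity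
    have h33 : (0:ℝ) < t^3 := by positivity
    nlinarith
  have hx0 : 0 < x := lt_of_le_of_lt (by positivity) hx2
  have hfe : f κ x = x^2 * (x - g2 κ) + (g3 κ / κ^9) * (x - 1/κ^6) := by
    unfold f
    field_simp
    ring
  rw [hfe]
  have h1 : 0 < x^2 * (x - g2 κ) := by
    apply mul_pos (by positivity) (by linarith)
  have h2 : 0 < (g3 κ / κ^9) * (x - 1/κ^6) := by
    apply mul_pos (by positivity) (by linarith)
  linarith
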